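/- Define P(s) := ∏_{n=0}^∞ E_{d'}(s/z_n²)^{k_n}. Then: (1) for every s ∈ ℂ the infinite product converges (the family is multipliable); (2) P is differentiable on all of ℂ (entire); and (3) P(s) = 0 if and only if s = z_n² for some n. -/

import Mathlib

/-- The Weierstrass elementary factor: `E 0 w = 1 - w` and
`E p w = (1 - w) * exp (∑_{k=1}^p w^k / k)` for `p ≥ 1`. -/
noncomputable def elemFactor (p : ℕ) (w : ℂ) : ℂ :=
  (1 - w) * Complex.exp (∑ k ∈ Finset.Icc 1 p, w ^ k / (k : ℂ))

/-!
For `‖w‖ ≤ 1/2` the elementary factor is `E_p(w) = exp (L_p(w))`, where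
`L_p(w) = log (1 - w) + ∑_{j ≤ p} w^j / j = -∑_{j > p} w^j / j`, so `‖L_p(w)‖ ≤ 2 ‖w‖^(p+1)`.
On a ball `‖s‖ < R`, all but finitely many factors `E_p(s / c_n)^(k_n)` are therefore
`exp (k_n L_p(s / c_n))` with `‖k_n L_p(s / c_n)‖ ≤ 2 R^(p+1) k_n / ‖c_n‖^(p+1)`, a summable bound.
The product is thus a finite product of entire functions times the exponential of a uniformly
convergent series of holomorphic functions: it is holomorphic on the ball, and its zeros are
those of the finitely many leading factors.
-/

open Complex Finset Filter

-- The principal logarithm of `elemFactor p w` near `w = 0`.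
noncomputable def elemLog (p : ℕ) (w : ℂ) : ℂ :=
  log (1 - w) + ∑ j ∈ Icc 1 p, w ^ j / (j : ℂ)

lemma elemFactor_eq_zero_iff {p : ℕ} {w : ℂ} : elemFactor p w = 0 ↔ w = 1 := by
  rw [elemFactor, mul_eq_zero, sub_eq_zero, eq_comm]
  simp [exp_ne_zero]

lemma differentiable_elemFactor (p : ℕ) : Differentiable ℂ (elemFactor p) := by
  unfold elemFactor
  fun_prop

lemma elemFactor_eq_cexp_elemLog {p : ℕ} {w : ℂ} (hw : ‖w‖ < 1) :
    elemFactor p w = exp (elemLog p w) := by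
  have hw1 : 1 - w ≠ 0 := by
    rintro h
    simp [← sub_eq_zero.mp h] at hw
  rw [elemFactor, elemLog, exp_add, exp_log hw1]

lemma differentiableAt_elemLog (p : ℕ) {w : ℂ} (hw : ‖w‖ < 1) :
    DifferentiableAt ℂ (elemLog p) w := by
  have hslit : 1 - w ∈ slitPlane := by
    simpa [sub_eq_add_neg] using mem_slitPlane_of_norm_lt_one (z := -w) (by rwa [norm_neg])
  unfold elemLog
  fun_prop (disch := exact hslit)

lemma logTaylor_neg (p : ℕ) (w : ℂ) :
    logTaylor (p + 1) (-w) = -∑ j ∈ Icc 1 p, w ^ j / (j : ℂ) := by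
  have hrange : range (p + 1) = insert 0 (Icc 1 p) := by
    ext j
    simp only [mem_range, mem_insert, mem_Icc]
    omega
  rw [logTaylor, hrange, sum_insert (by simp), ← sum_neg_distrib]
  simp only [pow_zero, CharP.cast_eq_zero, div_zero, zero_add]
  refine sum_congr rfl fun j _ => ?_
  rw [neg_pow w, ← mul_assoc, ← pow_add, Odd.neg_one_pow ⟨j, by ring⟩, neg_one_mul, neg_div]

lemma norm_elemLog_le {p : ℕ} {w : ℂ} (hw : ‖w‖ ≤ 1 / 2) :
    ‖elemLog p w‖ ≤ 2 * ‖w‖ ^ (p + 1) := by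
  have hTaylor := norm_log_sub_logTaylor_le p (z := -w) (by rw [norm_neg]; linarith)
  rw [logTaylor_neg, sub_neg_eq_add, ← sub_eq_add_neg, norm_neg] at hTaylor
  refine hTaylor.trans ?_
  have hinv : (1 - ‖w‖)⁻¹ ≤ 2 := by
    rw [inv_le_comm₀ (by linarith) two_pos]
    linarith
  calc ‖w‖ ^ (p + 1) * (1 - ‖w‖)⁻¹ / (p + 1) ≤ ‖w‖ ^ (p + 1) * (1 - ‖w‖)⁻¹ :=
        div_le_self (mul_nonneg (by positivity) (inv_nonneg.mpr (by linarith)))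
          (le_add_of_nonneg_left p.cast_nonneg)
    _ ≤ 2 * ‖w‖ ^ (p + 1) := by rw [mul_comm]; gcongr

lemma hasProd_prod_range_mul_cexp_tsum {a b : ℕ → ℂ} {N : ℕ}
    (hab : ∀ n ≥ N, a n = exp (b n)) (hb : Summable fun n => b (n + N)) :
    HasProd a ((∏ n ∈ range N, a n) * exp (∑' n, b (n + N))) := by
  refine HasProd.prod_range_mul ?_
  convert hb.hasSum.cexp using 1
  exact funext fun n => hab (n + N) (Nat.le_add_left N n)

lemma tprod_eq_zero_iff_of_eventually_eq_cexp {a b : ℕ → ℂ} {N : ℕ}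
    (hab : ∀ n ≥ N, a n = exp (b n)) (hb : Summable fun n => b (n + N)) :
    ∏' n, a n = 0 ↔ ∃ n, a n = 0 := by
  rw [(hasProd_prod_range_mul_cexp_tsum hab hb).tprod_eq, mul_eq_zero, prod_eq_zero_iff]
  simp only [exp_ne_zero, or_false, mem_range]
  refine ⟨fun ⟨n, _, hn⟩ => ⟨n, hn⟩, fun ⟨n, hn⟩ => ⟨n, ?_, hn⟩⟩
  by_contra! hNn
  exact exp_ne_zero _ ((hab n hNn).symm.trans hn)

lemma summable_nat_add_of_norm_le {b : ℕ → ℂ} {u : ℕ → ℝ} {N : ℕ} (hu : Summable u)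
    (hbu : ∀ n ≥ N, ‖b n‖ ≤ u n) : Summable fun n => b (n + N) :=
  ((summable_nat_add_iff N).mpr hu).of_norm_bounded fun n => hbu (n + N) (Nat.le_add_left N n)

lemma differentiableOn_tprod_of_eventually_eq_cexp {U : Set ℂ} (hU : IsOpen U)
    {f g : ℕ → ℂ → ℂ} {u : ℕ → ℝ} {N : ℕ} (hu : Summable u)
    (hf : ∀ n < N, DifferentiableOn ℂ (f n) U) (hg : ∀ n ≥ N, DifferentiableOn ℂ (g n) U)
    (hfg : ∀ n ≥ N, ∀ s ∈ U, f n s = exp (g n s)) (hgu : ∀ n ≥ N, ∀ s ∈ U, ‖g n s‖ ≤ u n) :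
    DifferentiableOn ℂ (fun s => ∏' n, f n s) U := by
  have htail : DifferentiableOn ℂ (fun s => ∑' n, g (n + N) s) U :=
    differentiableOn_tsum_of_summable_norm ((summable_nat_add_iff N).mpr hu)
      (fun n => hg (n + N) (Nat.le_add_left N n)) hU
      (fun n => hgu (n + N) (Nat.le_add_left N n))
  have hhead : DifferentiableOn ℂ (fun s => ∏ n ∈ range N, f n s) U :=
    DifferentiableOn.fun_finsetProd fun n hn => hf n (mem_range.mp hn)
  refine (hhead.mul htail.cexp).congr fun s hs => ?_
  exact (hasProd_prod_range_mul_cexp_tsum (fun n hn => hfg n hn s hs)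
    (summable_nat_add_of_norm_le hu fun n hn => hgu n hn s hs)).tprod_eq

section
variable {p : ℕ} {R : ℝ} {s c : ℂ}

lemma norm_div_le_half (hs : ‖s‖ ≤ R) (hc : 2 * R ≤ ‖c‖) : ‖s / c‖ ≤ 1 / 2 := by
  rw [norm_div]
  exact div_le_of_le_mul₀ (norm_nonneg c) (by norm_num) (by linarith [norm_nonneg s])

lemma elemFactor_pow_eq_cexp (k : ℕ) (hs : ‖s‖ ≤ R) (hc : 2 * R ≤ ‖c‖) :
    elemFactor p (s / c) ^ k = exp (k * elemLog p (s / c)) := by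
  rw [exp_nat_mul, elemFactor_eq_cexp_elemLog ((norm_div_le_half hs hc).trans_lt (by norm_num))]

lemma norm_natCast_mul_elemLog_le (k : ℕ) (hs : ‖s‖ ≤ R) (hc : 2 * R ≤ ‖c‖) :
    ‖(k : ℂ) * elemLog p (s / c)‖ ≤ 2 * R ^ (p + 1) * (k / ‖c‖ ^ (p + 1)) := by
  have hsc : ‖s / c‖ ≤ R / ‖c‖ := by
    rw [norm_div]
    exact div_le_div_of_nonneg_right hs (norm_nonneg c)
  calc ‖(k : ℂ) * elemLog p (s / c)‖ ≤ k * (2 * ‖s / c‖ ^ (p + 1)) := by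
        rw [norm_mul, norm_natCast]
        exact mul_le_mul_of_nonneg_left (norm_elemLog_le (norm_div_le_half hs hc)) k.cast_nonneg
    _ ≤ k * (2 * (R / ‖c‖) ^ (p + 1)) := by gcongr
    _ = 2 * R ^ (p + 1) * (k / ‖c‖ ^ (p + 1)) := by ring

end

section
variable {p : ℕ} {c : ℕ → ℂ} {k : ℕ → ℕ}

lemma exists_eventually_elemFactor_pow_eq_cexp (hc : Tendsto (fun n => ‖c n‖) atTop atTop)
    (hsum : Summable fun n => (k n : ℝ) / ‖c n‖ ^ (p + 1)) (s : ℂ) :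
    ∃ N, (∀ n ≥ N, elemFactor p (s / c n) ^ k n = exp (k n * elemLog p (s / c n))) ∧
      Summable fun n => (k (n + N) : ℂ) * elemLog p (s / c (n + N)) := by
  obtain ⟨N, hN⟩ := eventually_atTop.mp (hc.eventually_ge_atTop (2 * ‖s‖))
  refine ⟨N, fun n hn => elemFactor_pow_eq_cexp (k n) le_rfl (hN n hn), ?_⟩
  exact summable_nat_add_of_norm_le (b := fun n => (k n : ℂ) * elemLog p (s / c n))
    (hsum.mul_left (2 * ‖s‖ ^ (p + 1)))
    fun n hn => norm_natCast_mul_elemLog_le (k n) le_rfl (hN n hn)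

theorem multipliable_elemFactor_pow (hc : Tendsto (fun n => ‖c n‖) atTop atTop)
    (hsum : Summable fun n => (k n : ℝ) / ‖c n‖ ^ (p + 1)) (s : ℂ) :
    Multipliable fun n => elemFactor p (s / c n) ^ k n :=
  have ⟨_, hexp, hlog⟩ := exists_eventually_elemFactor_pow_eq_cexp hc hsum s
  (hasProd_prod_range_mul_cexp_tsum hexp hlog).multipliable

theorem tprod_elemFactor_pow_eq_zero_iff (hc : Tendsto (fun n => ‖c n‖) atTop atTop)
    (hsum : Summable fun n => (k n : ℝ) / ‖c n‖ ^ (p + 1)) (s : ℂ) :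
    ∏' n, elemFactor p (s / c n) ^ k n = 0 ↔ ∃ n, elemFactor p (s / c n) ^ k n = 0 :=
  have ⟨_, hexp, hlog⟩ := exists_eventually_elemFactor_pow_eq_cexp hc hsum s
  tprod_eq_zero_iff_of_eventually_eq_cexp hexp hlog

theorem differentiable_tprod_elemFactor_pow (hc : Tendsto (fun n => ‖c n‖) atTop atTop)
    (hsum : Summable fun n => (k n : ℝ) / ‖c n‖ ^ (p + 1)) :
    Differentiable ℂ fun s => ∏' n, elemFactor p (s / c n) ^ k n := by
  intro s₀
  set R := ‖s₀‖ + 1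
  obtain ⟨N, hN⟩ := eventually_atTop.mp (hc.eventually_ge_atTop (2 * R))
  have hball : ∀ s ∈ Metric.ball (0 : ℂ) R, ‖s‖ ≤ R := fun s hs => (mem_ball_zero_iff.mp hs).le
  refine (differentiableOn_tprod_of_eventually_eq_cexp Metric.isOpen_ball
    (hsum.mul_left (2 * R ^ (p + 1))) (fun n _ => ?_) (fun n hn => ?_)
    (fun n hn s hs => elemFactor_pow_eq_cexp _ (hball s hs) (hN n hn))
    (fun n hn s hs => norm_natCast_mul_elemLog_le _ (hball s hs) (hN n hn))).differentiableAt
    (Metric.isOpen_ball.mem_nhds (mem_ball_zero_iff.mpr (lt_add_one _)))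
  · exact (((differentiable_elemFactor p).comp (differentiable_id.div_const _)).pow
      _).differentiableOn
  · intro s hs
    have hlt : ‖s / c n‖ < 1 := (norm_div_le_half (hball s hs) (hN n hn)).trans_lt (by norm_num)
    have hlog : DifferentiableAt ℂ (fun s => elemLog p (s / c n)) s :=
      (differentiableAt_elemLog p hlt).fun_comp' s (differentiableAt_id.div_const (c n))
    exact (hlog.const_mul _).differentiableWithinAt

end

theorem hadamardProduct_entire_general (d' : ℕ) (z : ℕ → ℝ)
    (hzpos : ∀ n, 0 < z n) (hztop : Filter.Tendsto z Filter.atTop Filter.atTop)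
    (k : ℕ → ℕ) (hk : ∀ n, 0 < k n)
    (hsum : Summable fun n => (k n : ℝ) / z n ^ (2 * (d' + 1))) :
    (∀ s : ℂ, Multipliable fun n => elemFactor d' (s / (z n : ℂ) ^ 2) ^ k n) ∧
    Differentiable ℂ (fun s : ℂ => ∏' n, elemFactor d' (s / (z n : ℂ) ^ 2) ^ k n) ∧
    ∀ s : ℂ, (∏' n, elemFactor d' (s / (z n : ℂ) ^ 2) ^ k n) = 0 ↔ ∃ n, s = (z n : ℂ) ^ 2 := by
  have hnorm : ∀ n, ‖(z n : ℂ) ^ 2‖ = z n ^ 2 := fun n => by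
    rw [norm_pow, norm_real, Real.norm_of_nonneg (hzpos n).le]
  have hc : Tendsto (fun n => ‖(z n : ℂ) ^ 2‖) atTop atTop :=
    ((tendsto_pow_atTop two_ne_zero).comp hztop).congr fun n => (hnorm n).symm
  have hsum' : Summable fun n => (k n : ℝ) / ‖(z n : ℂ) ^ 2‖ ^ (d' + 1) := by
    simpa only [hnorm, ← pow_mul] using hsum
  refine ⟨multipliable_elemFactor_pow hc hsum', differentiable_tprod_elemFactor_pow hc hsum',
    fun s => (tprod_elemFactor_pow_eq_zero_iff hc hsum' s).trans (exists_congr fun n => ?_)⟩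
  have hz2 : (z n : ℂ) ^ 2 ≠ 0 := pow_ne_zero 2 (ofReal_ne_zero.mpr (hzpos n).ne')
  rw [pow_eq_zero_iff (hk n).ne', elemFactor_eq_zero_iff, div_eq_one_iff_eq hz2]

/-- For pairwise distinct positive reals `z n → ∞` and multiplicities `k n ≥ 1` with
`∑ n, k n / z n ^ (2*(d'+1)) < ∞`, the product `P s = ∏' n, E d' (s / z n ^ 2) ^ k n`
converges for every `s`, defines an entire function, and vanishes exactly at the
points `s = z n ^ 2`. -/
theorem hadamardProduct_entire (d' : ℕ) (z : ℕ → ℝ) (hzinj : Function.Injective z)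
    (hzpos : ∀ n, 0 < z n) (hztop : Filter.Tendsto z Filter.atTop Filter.atTop)
    (k : ℕ → ℕ) (hk : ∀ n, 0 < k n)
    (hsum : Summable fun n => (k n : ℝ) / z n ^ (2 * (d' + 1))) :
    (∀ s : ℂ, Multipliable fun n => elemFactor d' (s / (z n : ℂ) ^ 2) ^ k n) ∧
    Differentiable ℂ (fun s : ℂ => ∏' n, elemFactor d' (s / (z n : ℂ) ^ 2) ^ k n) ∧
    ∀ s : ℂ, (∏' n, elemFactor d' (s / (z n : ℂ) ^ 2) ^ k n) = 0 ↔ ∃ n, s = (z n : ℂ) ^ 2 :=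
  hadamardProduct_entire_general d' z hzpos hztop k hk hsum
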